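/- arXiv:2111.11549 — 6 statements merged into one kernel-verified Lean document; each statement's English description precedes it below -/
import Mathlib

section
/- For every positive integer $n$ and integer $A \geq 2$, the number $N = A^2 n^2 - n$ is positive and not a perfect square, and the continued fraction expansion of $\sqrt{N}$ is $[An-1; \overline{1, 2A-2, 1, 2An-2}]$ (period four). -/
open GenContFract

lemma myof_eq {x f : ℝ} {a : ℤ} (h : x = (a : ℝ) + f) (h0 : 0 ≤ f) (h1 : f < 1) :
    IntFractPair.of x = ⟨a, f⟩ := by
  have hf : ⌊x⌋ = a := by
    rw [Int.floor_eq_iff]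
    refine ⟨by linarith, by linarith⟩
  simp only [IntFractPair.of, Int.fract, hf]
  congr 1
  rw [h]; ring

lemma keystream (A n : ℤ) (c : ℝ) (hA : 2 ≤ A) (hn : 1 ≤ n)
    (hc2 : c ^ 2 = (A:ℝ) ^ 2 * (n:ℝ) ^ 2 - (n:ℝ))
    (hl : (A:ℝ) * n - 1 < c) (hu : c < (A:ℝ) * n) :
    ∀ k : ℕ, IntFractPair.stream c (k + 1) =
      some (match k % 4 with
        | 0 => ⟨1, (c - A*n + n)/(2*A*n - n - 1)⟩
        | 1 => ⟨2*A - 2, (c - A*n + n)/n⟩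
        | 2 => ⟨1, (c - A*n + 1)/(2*A*n - n - 1)⟩
        | 3 => ⟨2*A*n - 2, c - A*n + 1⟩
        | _ => ⟨0, 0⟩) := by
  have ha : (2:ℝ) ≤ (A:ℝ) := by exact_mod_cast hA
  have ht : (1:ℝ) ≤ (n:ℝ) := by exact_mod_cast hn
  have ht0 : (0:ℝ) < (n:ℝ) := by linarith
  have hq : (0:ℝ) < 2*(A:ℝ)*n - n - 1 := by nlinarith
  set a : ℝ := (A:ℝ)
  set t : ℝ := (n:ℝ)
  set q : ℝ := 2*a*t - t - 1 with hqdef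
  -- bounds for the fractional parts
  have hf0b : 0 < c - a*t + 1 ∧ c - a*t + 1 < 1 := ⟨by linarith, by linarith⟩
  have hf1b : 0 < (c - a*t + t)/q ∧ (c - a*t + t)/q < 1 :=
    ⟨div_pos (by nlinarith) hq, by rw [div_lt_one hq]; nlinarith⟩
  have hf2b : 0 < (c - a*t + t)/t ∧ (c - a*t + t)/t < 1 :=
    ⟨div_pos (by nlinarith) ht0, by rw [div_lt_one ht0]; nlinarith⟩
  have hf3b : 0 < (c - a*t + 1)/q ∧ (c - a*t + 1)/q < 1 :=
    ⟨div_pos (by nlinarith) hq, by rw [div_lt_one hq]; nlinarith⟩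
  -- inverse identities
  have hqne : q ≠ 0 := ne_of_gt hq
  have htne : t ≠ 0 := ne_of_gt ht0
  have I0 : (c - a*t + 1)⁻¹ = ((1:ℤ):ℝ) + (c - a*t + t)/q := by
    apply inv_eq_of_mul_eq_one_right
    field_simp
    linear_combination hc2
  have I1 : ((c - a*t + t)/q)⁻¹ = ((2*A - 2 : ℤ):ℝ) + (c - a*t + t)/t := by
    apply inv_eq_of_mul_eq_one_right
    push_cast
    field_simp
    linear_combination hc2
  have I2 : ((c - a*t + t)/t)⁻¹ = ((1:ℤ):ℝ) + (c - a*t + 1)/q := by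
    apply inv_eq_of_mul_eq_one_right
    push_cast
    field_simp
    linear_combination hc2
  have I3 : ((c - a*t + 1)/q)⁻¹ = ((2*A*n - 2 : ℤ):ℝ) + (c - a*t + 1) := by
    apply inv_eq_of_mul_eq_one_right
    push_cast
    field_simp
    linear_combination hc2
  -- the four `of` computations
  have O0 : IntFractPair.of ((c - a*t + 1)⁻¹) = ⟨1, (c - a*t + t)/q⟩ :=
    myof_eq I0 hf1b.1.le hf1b.2
  have O1 : IntFractPair.of (((c - a*t + t)/q)⁻¹) = ⟨2*A - 2, (c - a*t + t)/t⟩ :=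
    myof_eq I1 hf2b.1.le hf2b.2
  have O2 : IntFractPair.of (((c - a*t + t)/t)⁻¹) = ⟨1, (c - a*t + 1)/q⟩ :=
    myof_eq I2 hf3b.1.le hf3b.2
  have O3 : IntFractPair.of (((c - a*t + 1)/q)⁻¹) = ⟨2*A*n - 2, c - a*t + 1⟩ :=
    myof_eq I3 hf0b.1.le hf0b.2
  -- base: stream 0
  have S0 : IntFractPair.stream c 0 = some ⟨A*n - 1, c - a*t + 1⟩ := by
    rw [IntFractPair.stream_zero]
    congr 1
    apply myof_eq (by push_cast; ring) (by linarith) (by linarith)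
  intro k
  induction k with
  | zero =>
    simp only [Nat.zero_mod]
    have := IntFractPair.stream_succ_of_some S0 (by exact ne_of_gt hf0b.1)
    rw [this, O0]
  | succ k ih =>
    have hk4 : k % 4 = 0 ∨ k % 4 = 1 ∨ k % 4 = 2 ∨ k % 4 = 3 := by omega
    rcases hk4 with h | h | h | h <;>
      rw [h] at ih <;>
      [ (have h' : (k+1) % 4 = 1 := by omega);
        (have h' : (k+1) % 4 = 2 := by omega);
        (have h' : (k+1) % 4 = 3 := by omega);
        (have h' : (k+1) % 4 = 0 := by omega)] <;>
      rw [h'] <;>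
      [ (rw [IntFractPair.stream_succ_of_some ih (by exact ne_of_gt hf1b.1)]; exact congrArg some O1);
        (rw [IntFractPair.stream_succ_of_some ih (by exact ne_of_gt hf2b.1)]; exact congrArg some O2);
        (rw [IntFractPair.stream_succ_of_some ih (by exact ne_of_gt hf3b.1)]; exact congrArg some O3);
        (rw [IntFractPair.stream_succ_of_some ih (by exact ne_of_gt hf0b.1)]; exact congrArg some O0)]

/-- For every positive integer `n` and integer `A ≥ 2`, the number `N = A²n² - n` is positive
and not a perfect square, and the continued fraction expansion of `√N` is
`[An-1; 1, 2A-2, 1, 2An-2, 1, 2A-2, 1, 2An-2, …]`, i.e. with periodic part `(1, 2A-2, 1, 2An-2)`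
of period four. -/
theorem statement0 (n A : ℤ) (hn : 0 < n) (hA : 2 ≤ A) (N : ℤ) (hN : N = A ^ 2 * n ^ 2 - n) :
    0 < N ∧ ¬ IsSquare N ∧
    (GenContFract.of (Real.sqrt N)).h = (A * n - 1 : ℤ) ∧
    ∀ m : ℕ, (GenContFract.of (Real.sqrt N)).partDens.get? m =
      some (([1, 2 * A - 2, 1, 2 * A * n - 2] : List ℤ).get ⟨m % 4, by simp only [List.length_cons, List.length_nil]; omega⟩ : ℤ) := by
  have hsq1 : (A * n - 1) ^ 2 < N := by nlinarith
  have hsq2 : N < (A * n) ^ 2 := by nlinarith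
  have hNpos : 0 < N := by nlinarith
  refine ⟨hNpos, ?_, ?_, ?_⟩
  · rintro ⟨r, hr⟩
    have h1 : (A * n - 1) ^ 2 < |r| ^ 2 := by rw [sq_abs]; nlinarith
    have h2 : |r| ^ 2 < (A * n) ^ 2 := by rw [sq_abs]; nlinarith
    have h3 : 0 ≤ |r| := abs_nonneg r
    have h4 : A * n - 1 < |r| := by nlinarith
    have h5 : |r| < A * n := by nlinarith
    omega
  all_goals {
    have hN0 : (0:ℝ) ≤ (N:ℝ) := by exact_mod_cast hNpos.le
    have hc2 : Real.sqrt N ^ 2 = (A:ℝ)^2 * (n:ℝ)^2 - (n:ℝ) := by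
      rw [Real.sq_sqrt hN0, hN]; push_cast; ring
    have ha : (2:ℝ) ≤ (A:ℝ) := by exact_mod_cast hA
    have ht : (1:ℝ) ≤ (n:ℝ) := by exact_mod_cast hn
    have hsq1R : ((A:ℝ)*n - 1)^2 < (N:ℝ) := by
      exact_mod_cast hsq1
    have hsq2R : (N:ℝ) < ((A:ℝ)*n)^2 := by
      exact_mod_cast hsq2
    have hl : (A:ℝ) * n - 1 < Real.sqrt N := by
      nlinarith [Real.sq_sqrt hN0, Real.sqrt_nonneg (N:ℝ)]
    have hu : Real.sqrt N < (A:ℝ) * n := by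
      nlinarith [Real.sq_sqrt hN0, Real.sqrt_nonneg (N:ℝ)]
    have hfloor : ⌊Real.sqrt N⌋ = A * n - 1 := by
      rw [Int.floor_eq_iff]
      constructor
      · push_cast; linarith
      · push_cast; linarith
    first
    | (rw [of_h_eq_floor, hfloor])
    | (intro m
       have KS := keystream A n (Real.sqrt N) hA hn hc2 hl hu m
       have hs := get?_of_eq_some_of_succ_get?_intFractPair_stream KS
       rw [show (GenContFract.of (Real.sqrt N)).partDens = ((GenContFract.of (Real.sqrt N)).s.map Pair.b) from rfl,
           Stream'.Seq.map_get?, hs]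
       have hm4 : m % 4 = 0 ∨ m % 4 = 1 ∨ m % 4 = 2 ∨ m % 4 = 3 := by omega
       rcases hm4 with h | h | h | h <;>
         simp only [List.get_eq_getElem, Fin.val_mk] <;> simp only [h] <;> norm_num)
  }
end

section
/- Let $k \geq 1$, $n > k$, $d = \prod_{j=0}^{k}(n-j)^2 - n$, and $0 \leq i \leq k$. Then the fundamental unit $\varepsilon_{D_i}$ of $\mathbb{Q}(\sqrt{d+i})$ satisfies $\varepsilon_{D_i} \leq 4 n^{2k+1}$. -/
/-!
With `P = ∏_{j ≤ k} (n - j)` and `m = n - i` we have `d + i = P² - m` and `P = m q`, where `q` is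
the product of the other factors. Hence `(2qP - 1)² - (d + i)(2q)² = 1`, so `(2qP - 1) + 2q√(d+i)`
is a unit larger than `1`; it is below `4qP ≤ 4 n^k n^(k+1)`.
-/

open Polynomial in
theorem sqrtNatIsIntegral (N : ℕ) : IsIntegral ℚ (Real.sqrt N) := by
  refine ⟨X ^ 2 - C (N : ℚ), monic_X_pow_sub_C _ (by norm_num), ?_⟩
  simp [Real.sq_sqrt (by positivity : (0:ℝ) ≤ (N:ℝ))]

noncomputable def Qsqrt (N : ℕ) : IntermediateField ℚ ℝ :=
  IntermediateField.adjoin ℚ {Real.sqrt N}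

instance (N : ℕ) : FiniteDimensional ℚ (Qsqrt N) :=
  IntermediateField.adjoin.finiteDimensional (sqrtNatIsIntegral N)

instance (N : ℕ) : NumberField (Qsqrt N) := ⟨⟩

/-- The fundamental unit of `ℚ(√N)`, i.e. the smallest real number `> 1` that is (the image
under the real embedding of) a unit of the ring of integers of `ℚ(√N)`. -/
noncomputable def fundUnit (N : ℕ) : ℝ :=
  sInf {x : ℝ | 1 < x ∧ ∃ u : (NumberField.RingOfIntegers (Qsqrt N))ˣ,
    ((algebraMap (NumberField.RingOfIntegers (Qsqrt N)) (Qsqrt N) u : Qsqrt N) : ℝ) = x}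

open NumberField Finset

noncomputable def realEmb (N : ℕ) : 𝓞 (Qsqrt N) →+* ℝ :=
  (algebraMap (Qsqrt N) ℝ).comp (algebraMap (𝓞 (Qsqrt N)) (Qsqrt N))

lemma realEmb_injective (N : ℕ) : Function.Injective (realEmb N) :=
  (algebraMap (Qsqrt N) ℝ).injective.comp RingOfIntegers.coe_injective

lemma fundUnit_le_realEmb {N : ℕ} (u : (𝓞 (Qsqrt N))ˣ) (hu : 1 < realEmb N u) :
    fundUnit N ≤ realEmb N u :=
  csInf_le ⟨1, fun _ hx => hx.1.le⟩ ⟨hu, u, rfl⟩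

lemma exists_realEmb_eq_sqrt (N : ℕ) : ∃ s : 𝓞 (Qsqrt N), realEmb N s = √N := by
  let s : Qsqrt N := ⟨√N, IntermediateField.subset_adjoin ℚ _ rfl⟩
  have hs : IsIntegral ℤ s := by
    refine ⟨Polynomial.X ^ 2 - Polynomial.C (N : ℤ),
      Polynomial.monic_X_pow_sub_C _ two_ne_zero, ?_⟩
    apply Subtype.ext
    simp [s, Real.sq_sqrt (Nat.cast_nonneg N)]
  exact ⟨⟨s, hs⟩, rfl⟩

lemma exists_unit_realEmb_eq {N : ℕ} {a b : ℤ} (h : a ^ 2 - N * b ^ 2 = 1) :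
    ∃ u : (𝓞 (Qsqrt N))ˣ, realEmb N u = a + b * √N := by
  obtain ⟨s, hs⟩ := exists_realEmb_eq_sqrt N
  have hss : s * s = N := realEmb_injective N <| by
    simp [hs, Real.mul_self_sqrt (Nat.cast_nonneg N)]
  have h' : (a : 𝓞 (Qsqrt N)) ^ 2 - N * b ^ 2 = 1 := by
    exact_mod_cast congrArg (Int.cast : ℤ → 𝓞 (Qsqrt N)) h
  refine ⟨Units.mkOfMulEqOne (a + b * s) (a - b * s)
    (by linear_combination h' - (b : 𝓞 (Qsqrt N)) ^ 2 * hss), ?_⟩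
  simp [hs]

lemma fundUnit_le_of_sq_sub_mul_sq_eq_one {N : ℕ} {a b : ℤ} (ha : 1 < a) (hb : 0 ≤ b)
    (h : a ^ 2 - N * b ^ 2 = 1) : fundUnit N ≤ a + b * √N := by
  obtain ⟨u, hu⟩ := exists_unit_realEmb_eq h
  rw [← hu]
  refine fundUnit_le_realEmb u ?_
  rw [hu]
  have hb' : (0 : ℝ) ≤ b * √N := mul_nonneg (by exact_mod_cast hb) (Real.sqrt_nonneg _)
  linarith [show (1 : ℝ) < a by exact_mod_cast ha]

lemma fundUnit_le_four_mul {N m q P : ℕ} (hP : P = m * q) (hN : N + m = P ^ 2)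
    (hqP : 1 < q * P) : fundUnit N ≤ 4 * q * P := by
  have hpell : (2 * q * P - 1 : ℤ) ^ 2 - N * (2 * q) ^ 2 = 1 := by
    have hN' : (N : ℤ) = P ^ 2 - m := by rw [← Nat.cast_pow, ← hN]; push_cast; ring
    rw [hN', hP]; push_cast; ring
  have hqP' : (1 : ℤ) < q * P := by exact_mod_cast hqP
  have hsqrt : √N ≤ P :=
    (Real.sqrt_le_left (Nat.cast_nonneg P)).mpr (by exact_mod_cast (by omega : N ≤ P ^ 2))
  calc fundUnit N ≤ ((2 * q * P - 1 : ℤ) : ℝ) + ((2 * q : ℤ) : ℝ) * √N :=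
        fundUnit_le_of_sq_sub_mul_sq_eq_one (by linarith) (by positivity) hpell
    _ ≤ 4 * q * P := by
        push_cast
        nlinarith [mul_le_mul_of_nonneg_left hsqrt (by positivity : (0 : ℝ) ≤ 2 * q)]

lemma one_le_sub_of_mem_range {k n j : ℕ} (hn : k < n) (hj : j ∈ range (k + 1)) :
    1 ≤ n - j := by
  rw [mem_range] at hj; omega

/-- Let `k ≥ 1`, `n > k`, `d = ∏_{j=0}^k (n-j)² - n`, and `0 ≤ i ≤ k`. Then the fundamental
unit of `ℚ(√(d+i))` satisfies `ε ≤ 4 n^(2k+1)`. -/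
theorem statement4 (k : ℕ) (hk : 1 ≤ k) (n : ℕ) (hn : k < n)
    (d : ℕ) (hd : (d : ℤ) = (∏ j ∈ Finset.range (k + 1), ((n : ℤ) - j) ^ 2) - n)
    (i : ℕ) (hi : i ≤ k) :
    fundUnit (d + i) ≤ 4 * (n : ℝ) ^ (2 * k + 1) := by
  set P := ∏ j ∈ range (k + 1), (n - j) with hP
  set q := ∏ j ∈ (range (k + 1)).erase i, (n - j)
  have hi' : i ∈ range (k + 1) := mem_range.mpr (by omega)
  have hPq : P = (n - i) * q := (mul_prod_erase _ _ hi').symm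
  have hN : d + i + (n - i) = P ^ 2 := by
    have hPZ : (P : ℤ) = ∏ j ∈ range (k + 1), ((n : ℤ) - j) := by
      rw [hP, Nat.cast_prod]
      exact prod_congr rfl fun j hj =>
        Nat.cast_sub (by have := one_le_sub_of_mem_range hn hj; omega)
    zify [hi.trans hn.le]
    rw [hPZ, ← prod_pow, hd]
    ring
  have hq1 : 1 ≤ q := one_le_prod' fun j hj => one_le_sub_of_mem_range hn (mem_of_mem_erase hj)
  have hnP : n ≤ P := by
    simpa using
      single_le_prod' (fun j hj => one_le_sub_of_mem_range hn hj) (mem_range.mpr k.succ_pos)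
  have hqP : q * P ≤ n ^ (2 * k + 1) := by
    have hqn : q ≤ n ^ k := by
      simpa [hi'] using prod_le_pow_card ((range (k + 1)).erase i) (n - ·) n fun j _ => n.sub_le j
    have hPn : P ≤ n ^ (k + 1) := by
      simpa using prod_le_pow_card (range (k + 1)) (n - ·) n fun j _ => n.sub_le j
    calc q * P ≤ n ^ k * n ^ (k + 1) := Nat.mul_le_mul hqn hPn
      _ = n ^ (2 * k + 1) := by ring
  calc fundUnit (d + i) ≤ 4 * q * P := fundUnit_le_four_mul hPq hN (by nlinarith)
    _ ≤ 4 * (n : ℝ) ^ (2 * k + 1) := by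
      rw [mul_assoc]; exact_mod_cast Nat.mul_le_mul_left 4 hqP
end

section
/- Fix an integer $k \geq 1$ and $i$ with $0 \leq i \leq k$. The polynomial $P_i(x) = (x-i)\prod_{0 \leq j \leq k, j \neq i}(x-j)^2 - 1 \in \mathbb{Z}[x]$ has no repeated complex roots. -/
/-!
`P` is monic of degree `2k + 1` with `P(m) = -1` for `m = 0, …, k`. A repeated factor over `ℚ`
gives, by Gauss's lemma, `P = a² b` with `a, b` monic in `ℤ[X]`. At each `m` the integer `a(m)²`
divides `-1`, so `a(m)² = 1` and `b(m) = -1`: both `a² - 1` and `b + 1` have `k + 1` roots. Unless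
`a = 1` this forces `deg a² ≥ k + 1` and `deg b ≥ k + 1`, too much for `deg P = 2k + 1`. Over the
perfect field `ℚ` squarefree means separable, which survives the extension to `ℂ`.
-/

open Polynomial Finset

namespace Polynomial

section NodeProd

variable {R : Type*} [CommRing R] {ι : Type*} [DecidableEq ι]

noncomputable def nodeProd (s : Finset ι) (f : ι → R) (i : ι) : R[X] :=
  (X - C (f i)) * ∏ j ∈ s.erase i, (X - C (f j)) ^ 2

theorem monic_nodeProd (s : Finset ι) (f : ι → R) (i : ι) : (nodeProd s f i).Monic :=
  (monic_X_sub_C _).mul (monic_prod_of_monic _ _ fun _ _ => (monic_X_sub_C _).pow 2)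

theorem natDegree_nodeProd [Nontrivial R] {s : Finset ι} (f : ι → R) {i : ι} (hi : i ∈ s) :
    (nodeProd s f i).natDegree = 2 * #s - 1 := by
  have hcard := card_pos.mpr ⟨i, hi⟩
  rw [nodeProd, (monic_X_sub_C _).natDegree_mul
      (monic_prod_of_monic _ _ fun _ _ => (monic_X_sub_C _).pow 2), natDegree_X_sub_C,
    natDegree_prod_of_monic _ _ fun _ _ => (monic_X_sub_C _).pow 2]
  simp only [(monic_X_sub_C _).natDegree_pow, natDegree_X_sub_C, sum_const, card_erase_of_mem hi,
    smul_eq_mul]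
  omega

theorem eval_nodeProd {s : Finset ι} (f : ι → R) (i : ι) {m : ι} (hm : m ∈ s) :
    (nodeProd s f i).eval (f m) = 0 := by
  rcases eq_or_ne m i with rfl | hmi
  · simp [nodeProd]
  · rw [nodeProd, eval_mul, eval_prod, prod_eq_zero (mem_erase.mpr ⟨hmi, hm⟩) (by simp),
      mul_zero]

end NodeProd

theorem card_le_natDegree_of_eval_eq {R : Type*} [CommRing R] [IsDomain R] {p : R[X]} {r : R}
    (hp : p ≠ C r) {s : Finset R} (heval : ∀ x ∈ s, p.eval x = r) : #s ≤ p.natDegree := by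
  by_contra! h
  exact hp (eq_of_natDegree_lt_card_of_eval_eq' p (C r) s (by simpa using heval) (by simpa))

theorem eq_one_of_mul_self_dvd_of_eval_eq_neg_one {P a : ℤ[X]} (hP : P.Monic) {s : Finset ℤ}
    (heval : ∀ x ∈ s, P.eval x = -1) (hdeg : P.natDegree < 2 * #s) (ha : a.Monic)
    (hdvd : a * a ∣ P) : a = 1 := by
  obtain ⟨b, rfl⟩ := hdvd
  have haa : (a * a).Monic := ha.mul ha
  have hb : b.Monic := haa.of_mul_monic_left hP
  simp only [eval_mul] at heval
  have hsq : ∀ x ∈ s, (a * a).eval x = 1 := fun x hx => by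
    rw [eval_mul]
    exact Int.eq_one_of_mul_eq_one_right (mul_self_nonneg _) (b := -b.eval x)
      (by linarith [heval x hx])
  have hb_eval : ∀ x ∈ s, b.eval x = -1 := fun x hx => by
    simpa [← eval_mul, hsq x hx] using heval x hx
  by_contra hne
  have hs_le_a : #s ≤ (a * a).natDegree := card_le_natDegree_of_eval_eq (fun h => hne ?_) hsq
  · have hs_le_b : #s ≤ b.natDegree := card_le_natDegree_of_eval_eq
      (fun h => by simpa [h] using hb.leadingCoeff) hb_eval
    rw [haa.natDegree_mul hb] at hdeg
    omega
  · rw [C_1] at h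
    exact ha.eq_one_of_isUnit (IsUnit.of_mul_eq_one a h)

theorem Monic.squarefree_map_of_forall_monic_mul_self_dvd {R : Type*} (K : Type*) [CommRing R]
    [IsDomain R] [IsIntegrallyClosed R] [Field K] [Algebra R K] [IsFractionRing R K] {P : R[X]}
    (hP : P.Monic) (h : ∀ a : R[X], a.Monic → a * a ∣ P → a = 1) :
    Squarefree (P.map (algebraMap R K)) := by
  intro g hg
  have hg0 : g ≠ 0 := by rintro rfl; simp [(hP.map _).ne_zero] at hg
  set g' := g * C g.leadingCoeff⁻¹
  have hg'_monic : g'.Monic := monic_mul_leadingCoeff_inv hg0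
  have hassoc : Associated g' g :=
    associated_mul_unit_left g _ (isUnit_C.mpr (by simpa using hg0))
  have hg' : g' * g' ∣ P.map (algebraMap R K) := (hassoc.mul_mul hassoc).dvd.trans hg
  obtain ⟨a, ha⟩ := IsIntegrallyClosed.eq_map_mul_C_of_dvd K hP ((dvd_mul_right g' g').trans hg')
  rw [hg'_monic.leadingCoeff, C_1, mul_one] at ha
  have ha_monic : a.Monic := monic_of_injective (IsFractionRing.injective R K) (ha ▸ hg'_monic)
  have haa : a * a ∣ P := hP.dvd_of_fraction_map_dvd_fraction_map (K := K)
    (ha_monic.mul ha_monic) (by rwa [Polynomial.map_mul, ha])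
  rw [h a ha_monic haa, Polynomial.map_one] at ha
  exact IsUnit.of_mul_eq_one _ ha.symm

end Polynomial

open Polynomial in
theorem statement10_general (k : ℕ) (i : ℕ) (hi : i ≤ k)
    (P : Polynomial ℤ)
    (hP : P = (X - C (i : ℤ)) * ∏ j ∈ (Finset.range (k + 1)).erase i, (X - C (j : ℤ)) ^ 2 - 1) :
    Squarefree (P.map (Int.castRingHom ℂ)) := by
  have hi' : i ∈ range (k + 1) := mem_range.mpr (by omega)
  have hP' : P = nodeProd (range (k + 1)) (fun j : ℕ => (j : ℤ)) i - C 1 := by rw [hP, C_1]; rfl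
  have hdeg : P.natDegree = 2 * (k + 1) - 1 := by
    rw [hP', natDegree_sub_C, natDegree_nodeProd _ hi', card_range]
  have hmonic : P.Monic := hP' ▸ (monic_nodeProd _ _ _).sub_of_left (by
    rw [degree_C one_ne_zero, ← natDegree_pos_iff_degree_pos, natDegree_nodeProd _ hi', card_range]
    omega)
  set t := (range (k + 1)).image (fun j : ℕ => (j : ℤ))
  have ht : #t = k + 1 := by rw [card_image_of_injective _ Nat.cast_injective, card_range]
  have heval : ∀ x ∈ t, P.eval x = -1 := by
    intro x hx
    obtain ⟨m, hm, rfl⟩ := mem_image.mp hx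
    rw [hP', eval_sub, eval_nodeProd _ _ hm, eval_C, zero_sub]
  have hsq : Squarefree (P.map (algebraMap ℤ ℚ)) :=
    hmonic.squarefree_map_of_forall_monic_mul_self_dvd ℚ fun a ha hdvd =>
      eq_one_of_mul_self_dvd_of_eval_eq_neg_one hmonic heval (by omega) ha hdvd
  have hsep := (PerfectField.separable_iff_squarefree.mpr hsq).map (f := algebraMap ℚ ℂ)
  rw [Polynomial.map_map, RingHom.ext_int ((algebraMap ℚ ℂ).comp _) (Int.castRingHom ℂ)] at hsep
  exact hsep.squarefree

open Polynomial in
/-- Fix `k ≥ 1` and `0 ≤ i ≤ k`. The polynomial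
`Pᵢ(x) = (x - i) ∏_{0 ≤ j ≤ k, j ≠ i} (x - j)² - 1 ∈ ℤ[x]` has no repeated complex roots,
i.e. it is squarefree as a polynomial over `ℂ`. -/
theorem statement10 (k : ℕ) (hk : 1 ≤ k) (i : ℕ) (hi : i ≤ k)
    (P : Polynomial ℤ)
    (hP : P = (X - C (i : ℤ)) * ∏ j ∈ (Finset.range (k + 1)).erase i, (X - C (j : ℤ)) ^ 2 - 1) :
    Squarefree (P.map (Int.castRingHom ℂ)) :=
  statement10_general k i hi P hP
end

section
/- Fix an integer $k \geq 1$. The polynomial $f(x) = \prod_{i=0}^{k}\left(\prod_{j=0}^{k}(x-j)^2 - (x-i)\right) \in \mathbb{Z}[x]$, of degree $2(k+1)^2$, has no repeated complex roots. -/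
/-!
Write `Q = ∏ⱼ (X - j)` and `gᵢ = Q² - (X - i)`. Each `gᵢ` is monic with `gᵢ' = 2QQ' - 1`, so at a
common root `a` of `gᵢ` and `gᵢ'` the algebraic integer `Q(a)Q'(a)` would equal `1/2`. Distinct
factors differ by the nonzero constant `i - i'`, hence are coprime, and a product of pairwise
coprime separable polynomials is separable.
-/

open Polynomial

theorem isCoprime_of_isUnit_sub {R : Type*} [CommRing R] {p q : R} (h : IsUnit (p - q)) :
    IsCoprime p q :=
  ⟨↑h.unit⁻¹, -↑h.unit⁻¹, by rw [neg_mul, ← sub_eq_add_neg, ← mul_sub, IsUnit.val_inv_mul]⟩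

theorem not_isIntegral_inv_two (K : Type*) [Field K] [CharZero K] :
    ¬ IsIntegral ℤ (2⁻¹ : K) := by
  rw [← map_ofNat (algebraMap ℚ K) 2, ← map_inv₀,
    isIntegral_algebraMap_iff (algebraMap ℚ K).injective, IsIntegrallyClosed.isIntegral_iff]
  rintro ⟨n, hn⟩
  have : (2 * n : ℚ) = 1 := by rw [eq_intCast] at hn; rw [hn]; norm_num
  norm_cast at this
  omega

theorem IsIntegral.aeval {R A : Type*} [CommRing R] [CommRing A] [Algebra R A] {a : A}
    (ha : IsIntegral R a) (p : R[X]) : IsIntegral R (aeval a p) :=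
  adjoin_le_integralClosure ha (aeval_mem_adjoin_singleton R a)

namespace Polynomial

theorem Monic.separable_map_of_derivative_eq_two_mul_sub_one {K : Type*} [Field K] [CharZero K]
    [IsAlgClosed K] {g h : ℤ[X]} (hg : g.Monic) (hder : derivative g = 2 * h - 1) :
    (g.map (Int.castRingHom K)).Separable := by
  rw [Separable, isCoprime_iff_aeval_ne_zero_of_isAlgClosed K K, ← algebraMap_int_eq,
    derivative_map]
  intro a
  rw [aeval_map_algebraMap, aeval_map_algebraMap, ← not_and_or]
  rintro ⟨ha, ha'⟩
  rw [hder, map_sub, map_mul, map_ofNat, map_one, sub_eq_zero] at ha'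
  exact not_isIntegral_inv_two K
    (eq_inv_of_mul_eq_one_right ha' ▸ IsIntegral.aeval ⟨g, hg, ha⟩ h)

section

variable {R : Type*} [CommRing R] [Nontrivial R] {P : R[X]}

theorem natDegree_sub_X_sub_C (hP : 1 < P.natDegree) (c : R) :
    (P - (X - C c)).natDegree = P.natDegree :=
  natDegree_sub_eq_left_of_natDegree_lt (by rwa [natDegree_X_sub_C])

theorem Monic.sub_X_sub_C (hm : P.Monic) (hP : 1 < P.natDegree) (c : R) :
    (P - (X - C c)).Monic :=
  hm.sub_of_left (by rw [degree_X_sub_C, degree_eq_natDegree hm.ne_zero]; exact_mod_cast hP)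

end

theorem derivative_sq_sub_X_sub_C {R : Type*} [CommRing R] (Q : R[X]) (c : R) :
    derivative (Q ^ 2 - (X - C c)) = 2 * (Q * derivative Q) - 1 := by
  rw [derivative_sub, derivative_sq, derivative_X_sub_C, C_ofNat, mul_assoc]

end Polynomial

open Polynomial in
theorem statement11_general (k : ℕ) (f : Polynomial ℤ)
    (hf : f = ∏ i ∈ Finset.range (k + 1),
      ((∏ j ∈ Finset.range (k + 1), (X - C (j : ℤ)) ^ 2) - (X - C (i : ℤ)))) :
    f.natDegree = 2 * (k + 1) ^ 2 ∧ Squarefree (f.map (Int.castRingHom ℂ)) := by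
  simp only [Finset.prod_pow] at hf
  set Q : ℤ[X] := ∏ j ∈ Finset.range (k + 1), (X - C (j : ℤ))
  have hQ : Q.Monic := monic_prod_of_monic _ _ fun j _ => monic_X_sub_C _
  have hQ2 : (Q ^ 2).natDegree = 2 * (k + 1) := by
    rw [natDegree_pow, natDegree_prod_of_monic _ _ fun j _ => monic_X_sub_C _,
      Finset.sum_congr rfl fun j _ => natDegree_X_sub_C _]
    simp
  have hQ2' : 1 < (Q ^ 2).natDegree := by omega
  have hmonic (i : ℕ) : (Q ^ 2 - (X - C (i : ℤ))).Monic := (hQ.pow 2).sub_X_sub_C hQ2' _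
  subst hf
  constructor
  · rw [natDegree_prod_of_monic _ _ fun i _ => hmonic i,
      Finset.sum_congr rfl fun i _ => natDegree_sub_X_sub_C hQ2' _, Finset.sum_const,
      Finset.card_range, smul_eq_mul, hQ2]
    ring
  · rw [Polynomial.map_prod]
    refine (separable_prod' (fun x _ y _ hxy => isCoprime_of_isUnit_sub ?_)
      fun i _ => (hmonic i).separable_map_of_derivative_eq_two_mul_sub_one
        (derivative_sq_sub_X_sub_C Q _)).squarefree
    rw [← Polynomial.map_sub, sub_sub_sub_cancel_left, sub_sub_sub_cancel_left, ← C_sub, map_C,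
      isUnit_C]
    exact Ne.isUnit (by simpa [sub_eq_zero] using hxy)

open Polynomial in
/-- Fix `k ≥ 1`. The polynomial `f(x) = ∏_{i=0}^{k} (∏_{j=0}^{k} (x-j)² - (x-i)) ∈ ℤ[x]`,
of degree `2(k+1)²`, has no repeated complex roots. -/
theorem statement11 (k : ℕ) (hk : 1 ≤ k) (f : Polynomial ℤ)
    (hf : f = ∏ i ∈ Finset.range (k + 1),
      ((∏ j ∈ Finset.range (k + 1), (X - C (j : ℤ)) ^ 2) - (X - C (i : ℤ)))) :
    f.natDegree = 2 * (k + 1) ^ 2 ∧ Squarefree (f.map (Int.castRingHom ℂ)) :=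
  statement11_general k f hf
end

section
/- Let $k \geq 1$, $n > k$, and $d = \prod_{j=0}^{k}(n-j)^2 - n$. Then for every $0 \leq i \leq k$, $d + i$ is positive and not a perfect square, so $\mathbb{Q}(\sqrt{d+i})$ is a real quadratic field. -/
/-! With `P = ∏_{j ≤ k} (n - j)` we have `d + i = P² - (n - i)`. Since `n - i` is a factor of `P`
and `P ≥ n ≥ 2`, the subtracted amount satisfies `0 < n - i ≤ P < 2P - 1`, so `d + i` lies strictly
between `(P - 1)²` and `P²`. -/

open Polynomial in
theorem finrank_Qsqrt_of_not_isSquare {N : ℕ} (hN : ¬ IsSquare N) :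
    Module.finrank ℚ (Qsqrt N) = 2 := by
  rw [Qsqrt, IntermediateField.adjoin.finrank (sqrtNatIsIntegral N)]
  have hroot : aeval (Real.sqrt N) (X ^ 2 - C (N : ℚ)) = 0 := by
    simp [Real.sq_sqrt (Nat.cast_nonneg N)]
  have hle : (minpoly ℚ (Real.sqrt N)).natDegree ≤ 2 := by
    calc (minpoly ℚ (Real.sqrt N)).natDegree ≤ (X ^ 2 - C (N : ℚ)).natDegree :=
          natDegree_le_natDegree (minpoly.min ℚ _ (monic_X_pow_sub_C _ two_ne_zero) hroot)
      _ = 2 := natDegree_X_pow_sub_C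
  have hge : 2 ≤ (minpoly ℚ (Real.sqrt N)).natDegree := by
    rw [minpoly.two_le_natDegree_iff (sqrtNatIsIntegral N)]
    exact irrational_sqrt_natCast_iff.mpr hN
  omega

theorem Nat.sq_sub_mem_Ioo {B m : ℕ} (hm₀ : 0 < m) (hmB : m + 1 < 2 * B) :
    B ^ 2 - m ∈ Set.Ioo ((B - 1) ^ 2) (B ^ 2) := by
  obtain ⟨C, rfl⟩ : ∃ C, B = C + 1 := ⟨B - 1, by omega⟩
  have : (C + 1) ^ 2 = C ^ 2 + 2 * C + 1 := by ring
  simp only [Set.mem_Ioo, add_tsub_cancel_right]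
  omega

theorem Nat.pos_and_not_isSquare_sq_sub {B m : ℕ} (hm₀ : 0 < m) (hmB : m + 1 < 2 * B) :
    0 < B ^ 2 - m ∧ ¬ IsSquare (B ^ 2 - m) := by
  obtain ⟨hlo, hhi⟩ := Nat.sq_sub_mem_Ioo hm₀ hmB
  refine ⟨by omega, ?_⟩
  rintro ⟨t, ht⟩
  exact Nat.not_exists_sq' hlo (by rwa [Nat.sub_add_cancel (by omega)]) ⟨t, by rw [ht, sq]⟩

/-- Let `k ≥ 1`, `n > k`, `d = ∏_{j=0}^k (n-j)² - n`. Then for every `0 ≤ i ≤ k`, `d + i` is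
positive and not a perfect square, so `ℚ(√(d+i))` is a real quadratic field (of degree 2). -/
theorem statement14 (k : ℕ) (hk : 1 ≤ k) (n : ℕ) (hn : k < n)
    (d : ℕ) (hd : (d : ℤ) = (∏ j ∈ Finset.range (k + 1), ((n : ℤ) - j) ^ 2) - n)
    (i : ℕ) (hi : i ≤ k) :
    0 < d + i ∧ ¬ IsSquare (d + i) ∧ Module.finrank ℚ (Qsqrt (d + i)) = 2 := by
  set P := ∏ j ∈ Finset.range (k + 1), (n - j)
  have hcast : (P : ℤ) = ∏ j ∈ Finset.range (k + 1), ((n : ℤ) - j) := by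
    push_cast [P]
    refine Finset.prod_congr rfl fun j hj => ?_
    rw [Nat.cast_sub (by have := Finset.mem_range.mp hj; omega)]
  have hP_pos : 0 < P := Finset.prod_pos fun j hj => by have := Finset.mem_range.mp hj; omega
  have hnP : n - 0 ≤ P := Nat.le_of_dvd hP_pos (Finset.dvd_prod_of_mem _ (by simp))
  have hmP : n - i ≤ P := Nat.le_of_dvd hP_pos (Finset.dvd_prod_of_mem _ (Finset.mem_range.mpr (by omega)))
  have hdi : d + i = P ^ 2 - (n - i) := by
    have : (n - i) ≤ P ^ 2 := le_trans hmP (Nat.le_self_pow two_ne_zero P)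
    zify [this, hi.trans hn.le]
    rw [hd, hcast, ← Finset.prod_pow]; ring
  obtain ⟨hpos, hsq⟩ := Nat.pos_and_not_isSquare_sq_sub (B := P) (m := n - i) (by omega) (by omega)
  rw [hdi]
  exact ⟨hpos, hsq, finrank_Qsqrt_of_not_isSquare hsq⟩
end

section
/- Let $k \geq 1$ and let $f(x) = \prod_{i=0}^{k}\left(\prod_{j=0}^{k}(x-j)^2 - (x-i)\right)$. Let $B$ be the largest integer dividing $f(n)$ for all integers $n$, and $B'$ the smallest divisor of $B$ such that $B/B'$ is squarefree. If $n$ is a positive integer with $n > k$ such that $f(n)/B'$ is squarefree, then for each $0 \leq i \leq k$ the squarefree part of $d + i$ (where $d = \prod_{j=0}^k (n-j)^2 - n$) is at least $(d+i)/B'$. -/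
/-!
Write `d + i = m s²`. It suffices to show `p^e ∣ B'` for every prime power `p^e ∣ s²` with
`e ≥ 2`. If this failed, then, since `f(n) = B' · (f(n)/B')` with a squarefree cofactor, `p` would
divide `B'` but none of the other factors `d + i'` of `f(n)`, so `p ∤ i - i'` for all `i' ≠ i`.
Minimality of `B'` forces `p ∣ B / B'`, hence `p² ∣ B ∣ f(i + p)`. But at `t = i + p` the square
`∏ (t - j)²` is divisible by `p²`, so `f(t) ≡ ∏ (i' - i - p) (mod p²)`: exactly one factor is
divisible by `p`, and only once.
-/

open Finset

theorem Prime.pow_dvd_of_pow_succ_dvd_mul_squarefree {α : Type*} [CommMonoidWithZero α]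
    [IsCancelMulZero α] {p b q : α} (hp : Prime p) (hq : Squarefree q) {e : ℕ}
    (h : p ^ (e + 1) ∣ b * q) : p ^ e ∣ b := by
  by_cases hpq : p ∣ q
  · obtain ⟨q', rfl⟩ := hpq
    have hpq' : ¬ p ∣ q' := fun ⟨r, hr⟩ =>
      hp.not_isUnit (hq p ⟨r, by rw [hr, mul_assoc]⟩)
    rw [pow_succ, mul_left_comm, mul_comm, mul_dvd_mul_iff_left hp.ne_zero] at h
    exact hp.pow_dvd_of_dvd_mul_right e hpq' h
  · exact (pow_dvd_pow p e.le_succ).trans (hp.pow_dvd_of_dvd_mul_right _ hpq h)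

theorem Prime.dvd_and_not_dvd_of_pow_dvd_of_mul_eq {α : Type*} [CommMonoidWithZero α]
    [IsCancelMulZero α] {p x r b q : α} (hp : Prime p) (hq : Squarefree q)
    (hxr : x * r = b * q) {e : ℕ} (he : 2 ≤ e) (hpx : p ^ e ∣ x) (hpb : ¬ p ^ e ∣ b) :
    p ∣ b ∧ ¬ p ∣ r := by
  obtain ⟨e, rfl⟩ : ∃ e', e = e' + 1 + 1 := ⟨e - 2, by omega⟩
  refine ⟨?_, fun hpr => hpb ?_⟩
  · have := hp.pow_dvd_of_pow_succ_dvd_mul_squarefree hq (hxr ▸ hpx.mul_right r)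
    exact (dvd_pow_self p e.succ_ne_zero).trans this
  · refine hp.pow_dvd_of_pow_succ_dvd_mul_squarefree hq ?_
    rw [pow_succ, ← hxr]
    exact mul_dvd_mul hpx hpr

theorem Nat.sq_dvd_of_prime_dvd_of_isLeast_squarefree_div {B B' p : ℕ} (hB : B ≠ 0)
    (hB' : IsLeast {b : ℕ | b ∣ B ∧ Squarefree (B / b)} B') (hp : p.Prime) (hpB' : p ∣ B') :
    p ^ 2 ∣ B := by
  obtain ⟨⟨⟨c, rfl⟩, hsf⟩, hleast⟩ := hB'
  obtain ⟨b, rfl⟩ := hpB'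
  have hb : 0 < b := Nat.pos_of_ne_zero fun hb => hB (by simp [hb])
  rw [Nat.mul_div_cancel_left _ (Nat.mul_pos hp.pos hb)] at hsf
  suffices hpc : p ∣ c by
    rw [sq]
    exact mul_dvd_mul (dvd_mul_right p b) hpc
  by_contra hpc
  have hsf' : Squarefree (p * b * c / b) := by
    rw [show p * b * c = b * (p * c) by ring, Nat.mul_div_cancel_left _ hb]
    exact (Nat.squarefree_mul (hp.coprime_iff_not_dvd.2 hpc)).2 ⟨hp.prime.squarefree, hsf⟩
  have hle : p * b ≤ b := hleast ⟨⟨p * c, by ring⟩, hsf'⟩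
  nlinarith [hp.two_le]

theorem Int.sq_dvd_of_forall_prime_pow_dvd {s N : ℤ}
    (h : ∀ p e : ℕ, p.Prime → 2 ≤ e → (p : ℤ) ^ e ∣ s ^ 2 → (p : ℤ) ^ e ∣ N) : s ^ 2 ∣ N := by
  have h' : ∀ p e : ℕ, p.Prime → 2 ≤ e → p ^ e ∣ s.natAbs ^ 2 → p ^ e ∣ N.natAbs := by
    intro p e hp he hps
    have := h p e hp he (by exact_mod_cast Int.natCast_dvd.mpr (by rwa [Int.natAbs_pow]))
    exact Int.natCast_dvd.mp (by exact_mod_cast this)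
  rw [← Int.natAbs_dvd_natAbs, Int.natAbs_pow, Nat.dvd_iff_prime_pow_dvd_dvd]
  intro p e hp hps
  rcases le_or_gt 2 e with he | he
  · exact h' p e hp he hps
  · interval_cases e
    · exact one_dvd _
    · have hps' : p ∣ s.natAbs := hp.dvd_of_dvd_pow (by simpa using hps)
      simpa using (dvd_pow_self p two_ne_zero).trans (h' p 2 hp le_rfl (pow_dvd_pow_of_dvd hps' 2))

theorem not_sq_dvd_prod_at_add_prime {k i p : ℕ} (hp : Prime (p : ℤ)) (hi : i ∈ range (k + 1))
    (hsep : ∀ i' ∈ (range (k + 1)).erase i, ¬ (p : ℤ) ∣ (i : ℤ) - i') :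
    ¬ (p : ℤ) ^ 2 ∣ ∏ i' ∈ range (k + 1),
      ((∏ j ∈ range (k + 1), ((i : ℤ) + p - j) ^ 2) - ((i : ℤ) + p - i')) := by
  set P := ∏ j ∈ range (k + 1), ((i : ℤ) + p - j) ^ 2
  have hP : (p : ℤ) ^ 2 ∣ P := by
    simpa only [add_sub_cancel_left] using dvd_prod_of_mem (fun j : ℕ => ((i : ℤ) + p - j) ^ 2) hi
  have hrest : ¬ (p : ℤ) ∣ ∏ i' ∈ (range (k + 1)).erase i, (P - ((i + p) - i')) := by
    intro h
    obtain ⟨i', hi', hdvd⟩ := (hp.dvd_finsetProd_iff _).mp h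
    refine hsep i' hi' ?_
    have hdiff : (i : ℤ) - i' = P - (P - ((i : ℤ) + p - i')) - p := by ring
    rw [hdiff]
    exact dvd_sub (dvd_sub ((dvd_pow_self _ two_ne_zero).trans hP) hdvd) dvd_rfl
  rw [← mul_prod_erase _ _ hi]
  intro h
  have hPp : (p : ℤ) ^ 2 ∣ P - p := by
    simpa using hp.pow_dvd_of_dvd_mul_right 2 hrest h
  have hpp : (p : ℤ) * p ∣ p * 1 := by
    simpa only [sub_sub_cancel, sq, mul_one] using dvd_sub hP hPp
  exact hp.not_isUnit (isUnit_of_dvd_one ((mul_dvd_mul_iff_left hp.ne_zero).mp hpp))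

open Polynomial in
theorem statement19_general (k : ℕ) (f : Polynomial ℤ)
    (hf : f = ∏ i ∈ Finset.range (k + 1),
      ((∏ j ∈ Finset.range (k + 1), (X - C (j : ℤ)) ^ 2) - (X - C (i : ℤ))))
    (B : ℕ) (hB : IsGreatest {b : ℕ | 0 < b ∧ ∀ n : ℤ, (b : ℤ) ∣ f.eval n} B)
    (B' : ℕ) (hB' : IsLeast {b : ℕ | b ∣ B ∧ Squarefree (B / b)} B')
    (n : ℤ) (hsf : Squarefree (f.eval n / B'))
    (d : ℤ) (hd : d = (∏ j ∈ Finset.range (k + 1), (n - (j : ℤ)) ^ 2) - n)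
    (i : ℕ) (hi : i ≤ k)
    (m s : ℤ) (hm0 : 0 ≤ m) (hms : d + i = m * s ^ 2) :
    d + i ≤ m * B' := by
  obtain ⟨⟨hBpos, hBdvd⟩, -⟩ := hB
  have hB'pos : 0 < B' := Nat.pos_of_dvd_of_pos hB'.1.1 hBpos
  have hfeval : ∀ t : ℤ, f.eval t = ∏ i' ∈ range (k + 1),
      ((∏ j ∈ range (k + 1), (t - (j : ℤ)) ^ 2) - (t - (i' : ℤ))) := by
    simp [hf, eval_prod]
  have hirange : i ∈ range (k + 1) := mem_range.mpr (Nat.lt_succ_of_le hi)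
  have hfn : (d + i) * ∏ i' ∈ (range (k + 1)).erase i, (d + (i' : ℤ)) =
      B' * (f.eval n / B') := by
    rw [Int.mul_ediv_cancel' ((Int.natCast_dvd_natCast.mpr hB'.1.1).trans (hBdvd n)),
      mul_prod_erase _ (fun i' : ℕ => d + (i' : ℤ)) hirange, hfeval, hd]
    exact prod_congr rfl fun _ _ => by ring
  have hs2 : s ^ 2 ∣ (B' : ℤ) := by
    refine Int.sq_dvd_of_forall_prime_pow_dvd fun p e hp he hps => ?_
    by_contra hpB'
    have hpz : Prime (p : ℤ) := Nat.prime_iff_prime_int.mp hp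
    have hpd : (p : ℤ) ^ e ∣ d + i := hps.trans (hms ▸ dvd_mul_left _ _)
    obtain ⟨hpB'', hpr⟩ := hpz.dvd_and_not_dvd_of_pow_dvd_of_mul_eq hsf hfn he hpd hpB'
    have hsep : ∀ i' ∈ (range (k + 1)).erase i, ¬ (p : ℤ) ∣ (i : ℤ) - i' := by
      intro i' hi' h
      have hpdi' : (p : ℤ) ∣ d + i' := by
        have := dvd_sub ((dvd_pow_self _ (by omega)).trans hpd) h
        rwa [show d + i - (i - i') = d + (i' : ℤ) by ring] at this
      exact hpr (hpdi'.trans (dvd_prod_of_mem (fun i' : ℕ => d + (i' : ℤ)) hi'))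
    have hp2B : p ^ 2 ∣ B := Nat.sq_dvd_of_prime_dvd_of_isLeast_squarefree_div hBpos.ne' hB' hp
      (Int.natCast_dvd_natCast.mp hpB'')
    refine not_sq_dvd_prod_at_add_prime hpz hirange hsep ?_
    rw [← hfeval]
    exact_mod_cast (Int.natCast_dvd_natCast.mpr hp2B).trans (hBdvd _)
  calc d + i = m * s ^ 2 := hms
    _ ≤ m * B' := mul_le_mul_of_nonneg_left (Int.le_of_dvd (by exact_mod_cast hB'pos) hs2) hm0

open Polynomial in
/-- Let `k ≥ 1` and `f(x) = ∏_{i=0}^{k} (∏_{j=0}^{k} (x-j)² - (x-i))`. Let `B` be the largest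
integer dividing `f(n)` for all integers `n`, and `B'` the smallest divisor of `B` with
`B/B'` squarefree. If `n > k` is such that `f(n)/B'` is squarefree, then for each `0 ≤ i ≤ k`
the squarefree part of `d + i` (where `d = ∏_{j=0}^k (n-j)² - n`) is at least `(d+i)/B'`:
if `d + i = m s²` with `m ≥ 0` squarefree, then `d + i ≤ m B'`. -/
theorem statement19 (k : ℕ) (hk : 1 ≤ k) (f : Polynomial ℤ)
    (hf : f = ∏ i ∈ Finset.range (k + 1),
      ((∏ j ∈ Finset.range (k + 1), (X - C (j : ℤ)) ^ 2) - (X - C (i : ℤ))))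
    (B : ℕ) (hB : IsGreatest {b : ℕ | 0 < b ∧ ∀ n : ℤ, (b : ℤ) ∣ f.eval n} B)
    (B' : ℕ) (hB' : IsLeast {b : ℕ | b ∣ B ∧ Squarefree (B / b)} B')
    (n : ℤ) (hn : (k : ℤ) < n) (hsf : Squarefree (f.eval n / B'))
    (d : ℤ) (hd : d = (∏ j ∈ Finset.range (k + 1), (n - (j : ℤ)) ^ 2) - n)
    (i : ℕ) (hi : i ≤ k)
    (m s : ℤ) (hm0 : 0 ≤ m) (hm : Squarefree m) (hms : d + i = m * s ^ 2) :
    d + i ≤ m * B' :=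
  statement19_general k f hf B hB B' hB' n hsf d hd i hi m s hm0 hms
end
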